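/- arXiv:2505.16651 — 2 statements merged into one kernel-verified Lean document; each statement's English description precedes it below -/
import Mathlib

section
/- Let F be the cdf of Z under P and ν = V@R_α^P(Z). Suppose the local growth condition holds: there exist b > 0, c > 0 such that F(z') − F(z) ≥ c(z' − z) for all ν − b ≤ z ≤ z' ≤ ν + b. If φ is any cdf with sup_{z ∈ [ν−b, ν+b]} |φ(z) − F(z)| ≤ ε and ε < bc, then |V@R_{α,φ} − ν| ≤ ε/c, where V@R_{α,φ} = inf{z : φ(z) ≥ 1 − α}. -/
/-- Deterministic quantile stability under the local growth condition:
if `F` satisfies the growth condition around `ν = inf{z : F z ≥ 1-α}` and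
`φ` is a cdf uniformly `ε`-close to `F` on `[ν-b, ν+b]` with `ε < b*c`,
then `|V@R_{α,φ} - ν| ≤ ε / c`. -/
theorem stmt_7 (F φ : ℝ → ℝ) (hFmono : Monotone F) (hφmono : Monotone φ)
    (hFrc : ∀ x, ContinuousWithinAt F (Set.Ici x) x)
    (hφrc : ∀ x, ContinuousWithinAt φ (Set.Ici x) x)
    (hF0 : Filter.Tendsto F Filter.atBot (nhds 0))
    (hF1 : Filter.Tendsto F Filter.atTop (nhds 1))
    (hφ0 : Filter.Tendsto φ Filter.atBot (nhds 0))
    (hφ1 : Filter.Tendsto φ Filter.atTop (nhds 1))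
    (α : ℝ) (hα : α ∈ Set.Ioo (0 : ℝ) 1)
    (ν : ℝ) (hν : ν = sInf {z : ℝ | 1 - α ≤ F z})
    (b c : ℝ) (hb : 0 < b) (hc : 0 < c)
    (hgrowth : ∀ z z', ν - b ≤ z → z ≤ z' → z' ≤ ν + b → c * (z' - z) ≤ F z' - F z)
    (ε : ℝ) (hε : 0 < ε) (hεbc : ε < b * c)
    (hclose : ∀ z ∈ Set.Icc (ν - b) (ν + b), |φ z - F z| ≤ ε) :
    |sInf {z : ℝ | 1 - α ≤ φ z} - ν| ≤ ε / c := by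
  obtain ⟨hα0, hα1⟩ := hα
  have hSne : ({z : ℝ | 1 - α ≤ F z}).Nonempty := by
    obtain ⟨z, hz⟩ := (hF1.eventually_const_lt (by linarith : (1:ℝ) - α < 1)).exists
    exact ⟨z, hz.le⟩
  have hSbdd : BddBelow {z : ℝ | 1 - α ≤ F z} := by
    obtain ⟨z₀, hz₀⟩ := (hF0.eventually_lt_const (by linarith : (0:ℝ) < 1 - α)).exists
    refine ⟨z₀, fun s hs => ?_⟩
    by_contra h
    push_neg at h
    exact absurd (le_trans hs (hFmono h.le)) (not_le.mpr hz₀)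
  have hνmem : ∀ z, ν < z → 1 - α ≤ F z := by
    intro z hz
    obtain ⟨s, hsS, hsz⟩ := exists_lt_of_csInf_lt hSne (hν ▸ hz)
    exact le_trans hsS (hFmono hsz.le)
  have hFν : 1 - α ≤ F ν := by
    have ht : Filter.Tendsto F (nhdsWithin ν (Set.Ioi ν)) (nhds (F ν)) :=
      (hFrc ν).mono_left (nhdsWithin_mono ν Set.Ioi_subset_Ici_self)
    exact ge_of_tendsto ht (eventually_nhdsWithin_of_forall fun z hz => hνmem z hz)
  have hlt : ∀ z, z < ν → F z < 1 - α := by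
    intro z hz
    by_contra h
    push_neg at h
    exact absurd (hν ▸ csInf_le hSbdd h) (not_le.mpr hz)
  have hδ : 0 < ε / c := div_pos hε hc
  have hδb : ε / c < b := (div_lt_iff₀ hc).mpr (by linarith)
  have hcδ : c * (ε / c) = ε := by field_simp
  have hup : ν + ε / c ∈ {z : ℝ | 1 - α ≤ φ z} := by
    have hg := hgrowth ν (ν + ε / c) (by linarith) (by linarith) (by linarith)
    have habs := abs_le.mp (hclose (ν + ε / c) ⟨by linarith, by linarith⟩)
    simp only [Set.mem_setOf_eq]
    nlinarith [habs.1, habs.2]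
  have hlb : ∀ z ∈ {z : ℝ | 1 - α ≤ φ z}, ν - ε / c ≤ z := by
    intro z hz
    by_contra h
    push_neg at h
    set z₀ := max z (ν - b) with hz₀def
    have hz₀1 : ν - b ≤ z₀ := le_max_right _ _
    have hz₀2 : z₀ < ν - ε / c := max_lt h (by linarith)
    set w := (z₀ + ε / c + ν) / 2 with hwdef
    have hw1 : z₀ < w := by rw [hwdef]; linarith
    have hw2 : w < ν := by rw [hwdef]; linarith
    have hwz : ε / c < w - z₀ := by rw [hwdef]; linarith
    have hg := hgrowth z₀ w hz₀1 hw1.le (by linarith)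
    have hFw := hlt w hw2
    have habs := abs_le.mp (hclose z₀ ⟨hz₀1, by linarith⟩)
    have hφz₀ : φ z₀ < 1 - α := by nlinarith [habs.1, habs.2, mul_lt_mul_of_pos_left hwz hc]
    have hmono : φ z ≤ φ z₀ := hφmono (le_max_left _ _)
    simp only [Set.mem_setOf_eq] at hz
    linarith
  have hTbdd : BddBelow {z : ℝ | 1 - α ≤ φ z} := ⟨ν - ε / c, hlb⟩
  have h1 : sInf {z : ℝ | 1 - α ≤ φ z} ≤ ν + ε / c := csInf_le hTbdd hup
  have h2 : ν - ε / c ≤ sInf {z : ℝ | 1 - α ≤ φ z} := le_csInf ⟨_, hup⟩ hlb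
  rw [abs_le]
  constructor <;> linarith
end

section
/- Let Z₁,...,Z_N be iid samples of Z ∼ P and P_N the empirical measure. Suppose κ := min{(1−α) − lim_{z↑ν} F(z), lim_{z↓ν} F(z) − (1−α)} > 0, where ν = V@R_α^P(Z) and F is the cdf of Z. Then P(V@R_α^{P_N} = V@R_α^P(Z)) ≥ 1 − 2e^{−2Nκ²}. -/
open MeasureTheory ProbabilityTheory Function

/-- Empirical cdf from samples `Z 0, ..., Z (N-1)`. -/
noncomputable def empCdf {Ω : Type*} (Z : ℕ → Ω → ℝ) (N : ℕ) (ω : Ω) (z : ℝ) : ℝ :=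
  (N : ℝ)⁻¹ * ∑ i ∈ Finset.range N, if Z i ω ≤ z then (1 : ℝ) else 0

/-!
A uniform perturbation of size `ε` of a monotone `F` cannot move the `q`-quantile as long as `ε`
stays below both jumps `q - F(ν-)` and `F(ν+) - q` of `F` around its quantile `ν`. Hence the event
`sup_z |F_N(z) - F(z)| ≤ ε` forces the empirical Value-at-Risk to equal `ν`, and DKW bounds the
probability of its complement by `2 exp(-2Nε²)` for every `ε < κ`; letting `ε ↑ κ` gives the claim.
The limit is needed because at `ε = κ` the empirical cdf may touch the level `1 - α` left of `ν`.
-/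

theorem sInf_setOf_le_eq_of_abs_sub_le {F G : ℝ → ℝ} (hF : Monotone F) {q ν ε : ℝ}
    (hleft : ε < q - leftLim F ν) (hright : ε < rightLim F ν - q)
    (hG : ∀ z, |G z - F z| ≤ ε) :
    sInf {z | q ≤ G z} = ν := by
  have above : ∀ z, ν < z → q ≤ G z := fun z hz => by
    linarith [hF.rightLim_le hz, (abs_le.1 (hG z)).1]
  refine csInf_eq_of_forall_ge_of_forall_gt_exists_lt ⟨ν + 1, above _ (lt_add_one ν)⟩
    (fun z hz => ?_) (fun w hw => ⟨(ν + w) / 2, above _ (by linarith), by linarith⟩)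
  by_contra! hlt
  linarith [hF.le_leftLim hlt, (abs_le.1 (hG z)).2, show q ≤ G z from hz]

theorem one_sub_measureReal_le_of_compl_subset {Ω : Type*} [MeasurableSpace Ω] (P : Measure Ω)
    [IsProbabilityMeasure P] {B G : Set Ω} (hBG : Bᶜ ⊆ G) :
    1 - P.real B ≤ P.real G := by
  have : 1 ≤ P.real B + P.real G :=
    calc 1 = P.real (B ∪ G) := by rw [Set.compl_subset_iff_union.1 hBG, probReal_univ]
      _ ≤ P.real B + P.real G := measureReal_union_le B G
  linarith

theorem stmt_8_general {Ω : Type*} [MeasurableSpace Ω] (P : Measure Ω) [IsProbabilityMeasure P]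
    (μ : Measure ℝ) [IsProbabilityMeasure μ]
    (Z : ℕ → Ω → ℝ) (N : ℕ) (α : ℝ)
    (F : ℝ → ℝ) (hF : F = fun z => (μ (Set.Iic z)).toReal) (ν : ℝ)
    (κ : ℝ) (hκdef : κ = min ((1 - α) - leftLim F ν) (rightLim F ν - (1 - α)))
    (hκ : 0 < κ)
    (hDKW : ∀ ε : ℝ, 0 < ε →
      (P {ω | ∃ z : ℝ, ε < |empCdf Z N ω z - F z|}).toReal ≤
        2 * Real.exp (-2 * N * ε ^ 2)) :
    1 - 2 * Real.exp (-2 * N * κ ^ 2) ≤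
      (P {ω | sInf {z : ℝ | 1 - α ≤ empCdf Z N ω z} = ν}).toReal := by
  have hmono : Monotone F := hF ▸ fun a b hab => measureReal_mono (Set.Iic_subset_Iic.2 hab)
  have bound_below_κ : ∀ ε ∈ Set.Ioo 0 κ, 1 - 2 * Real.exp (-2 * N * ε ^ 2) ≤
      (P {ω | sInf {z : ℝ | 1 - α ≤ empCdf Z N ω z} = ν}).toReal := by
    rintro ε ⟨hε, hεκ⟩
    rw [hκdef, lt_min_iff] at hεκ
    refine (sub_le_sub_left (hDKW ε hε) 1).trans (one_sub_measureReal_le_of_compl_subset P ?_)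
    intro ω hω
    simp only [Set.mem_compl_iff, Set.mem_ofPred_eq, not_exists, not_lt] at hω
    exact sInf_setOf_le_eq_of_abs_sub_le hmono hεκ.1 hεκ.2 hω
  have hcont : Continuous fun ε : ℝ => 1 - 2 * Real.exp (-2 * N * ε ^ 2) := by fun_prop
  exact le_of_tendsto (hcont.tendsto κ |>.mono_left nhdsWithin_le_nhds)
    (Filter.mem_of_superset (Ioo_mem_nhdsLT hκ) bound_below_κ)

/-- If `κ = min{(1-α) - F(ν-), F(ν+) - (1-α)} > 0`, then the empirical Value-at-Risk
equals the true Value-at-Risk with probability at least `1 - 2 exp(-2Nκ²)`. -/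
theorem stmt_8 {Ω : Type*} [MeasurableSpace Ω] (P : Measure Ω) [IsProbabilityMeasure P]
    (μ : Measure ℝ) [IsProbabilityMeasure μ]
    (Z : ℕ → Ω → ℝ) (hmeas : ∀ i, Measurable (Z i))
    (hlaw : ∀ i, Measure.map (Z i) P = μ)
    (hindep : iIndepFun Z P)
    (N : ℕ) (hN : 0 < N)
    (α : ℝ) (hα : α ∈ Set.Ioo (0 : ℝ) 1)
    (F : ℝ → ℝ) (hF : F = fun z => (μ (Set.Iic z)).toReal)
    (ν : ℝ) (hν : ν = sInf {z : ℝ | 1 - α ≤ F z})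
    (κ : ℝ) (hκdef : κ = min ((1 - α) - leftLim F ν) (rightLim F ν - (1 - α)))
    (hκ : 0 < κ)
    (hDKW : ∀ ε : ℝ, 0 < ε →
      (P {ω | ∃ z : ℝ, ε < |empCdf Z N ω z - F z|}).toReal ≤
        2 * Real.exp (-2 * N * ε ^ 2)) :
    1 - 2 * Real.exp (-2 * N * κ ^ 2) ≤
      (P {ω | sInf {z : ℝ | 1 - α ≤ empCdf Z N ω z} = ν}).toReal :=
  stmt_8_general P μ Z N α F hF ν κ hκdef hκ hDKW
end
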